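/- Let Δ be a fan of cones in N_ℝ × ℝ_{≥0} and for i ∈ {0,1} let Δ_i = {π(σ ∩ (N_ℝ × {i})) | σ ∈ Δ}. If Δ is Γ-admissible then Δ_1 is a Γ-rational polyhedral complex and Δ_0 is a rational fan in N_ℝ; moreover for every P ∈ Δ_1 the recession cone rec(P) lies in Δ_0. -/

import Mathlib

open scoped BigOperators

noncomputable def latticePair {n : ℕ} (u : Fin n → ℤ) (w : Fin n → ℝ) : ℝ :=
  ∑ i, (u i : ℝ) * w i

namespace GAux

variable {n : ℕ}

def castVec (v : Fin n → ℤ) : Fin n → ℝ := fun j => (v j : ℝ)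

noncomputable def dotL (u : Fin n → ℤ) : (Fin n → ℝ) →ₗ[ℝ] ℝ :=
  ∑ i, (u i : ℝ) • LinearMap.proj i

lemma dotL_apply (u : Fin n → ℤ) (w : Fin n → ℝ) : dotL u w = latticePair u w := by
  simp [dotL, latticePair, LinearMap.sum_apply, LinearMap.proj_apply]

def intDot (u v : Fin n → ℤ) : ℤ := ∑ k, u k * v k

lemma dotL_castVec (u v : Fin n → ℤ) : dotL u (castVec v) = (intDot u v : ℝ) := by
  simp [dotL_apply, latticePair, castVec, intDot]

def coneOf {ι : Type} [Fintype ι] (v : ι → Fin n → ℝ) : Set (Fin n → ℝ) :=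
  {w | ∃ c : ι → ℝ, (∀ i, 0 ≤ c i) ∧ w = ∑ i, c i • v i}

lemma gen_mem_coneOf {ι : Type} [Fintype ι] [DecidableEq ι] (v : ι → Fin n → ℝ) (i : ι) :
    v i ∈ coneOf v := by
  refine ⟨fun k => if k = i then 1 else 0, fun k => by positivity, ?_⟩
  rw [Finset.sum_congr rfl (g := fun k => if k = i then v i else 0)
    (fun k _ => by by_cases h : k = i <;> simp [h])]
  simp

lemma zero_mem_coneOf {ι : Type} [Fintype ι] (v : ι → Fin n → ℝ) : 0 ∈ coneOf v :=
  ⟨0, fun _ => le_rfl, by simp⟩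

lemma add_mem_coneOf {ι : Type} [Fintype ι] {v : ι → Fin n → ℝ} {x y : Fin n → ℝ}
    (hx : x ∈ coneOf v) (hy : y ∈ coneOf v) : x + y ∈ coneOf v := by
  obtain ⟨c, hc, rfl⟩ := hx; obtain ⟨d, hd, rfl⟩ := hy
  exact ⟨c + d, fun i => add_nonneg (hc i) (hd i), by simp [add_smul, Finset.sum_add_distrib]⟩

lemma smul_mem_coneOf {ι : Type} [Fintype ι] {v : ι → Fin n → ℝ} {x : Fin n → ℝ} {a : ℝ}
    (ha : 0 ≤ a) (hx : x ∈ coneOf v) : a • x ∈ coneOf v := by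
  obtain ⟨c, hc, rfl⟩ := hx
  exact ⟨a • c, fun i => mul_nonneg ha (hc i), by
    simp [Finset.smul_sum, smul_smul]⟩

lemma sum_mem_coneOf {ι κ : Type} [Fintype ι] [Fintype κ] {v : ι → Fin n → ℝ}
    {x : κ → Fin n → ℝ} (hx : ∀ k, x k ∈ coneOf v) {c : κ → ℝ} (hc : ∀ k, 0 ≤ c k) :
    ∑ k, c k • x k ∈ coneOf v := by
  classical
  have : ∀ s : Finset κ, ∑ k ∈ s, c k • x k ∈ coneOf v := by
    intro s
    induction s using Finset.induction with
    | empty => simpa using zero_mem_coneOf v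
    | @insert a s h ih =>
        rw [Finset.sum_insert h]
        exact add_mem_coneOf (smul_mem_coneOf (hc _) (hx _)) ih
  exact this _


open Classical in
noncomputable def ddGen {ι : Type} [Fintype ι] (v : ι → Fin n → ℝ)
    (φ : (Fin n → ℝ) →ₗ[ℝ] ℝ) : ι ⊕ ι × ι → Fin n → ℝ :=
  Sum.elim (fun i => if 0 ≤ φ (v i) then v i else 0)
    (fun p => if 0 < φ (v p.1) ∧ φ (v p.2) < 0
      then φ (v p.1) • v p.2 - φ (v p.2) • v p.1 else 0)

lemma ddGen_nonneg {ι : Type} [Fintype ι] (v : ι → Fin n → ℝ)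
    (φ : (Fin n → ℝ) →ₗ[ℝ] ℝ) (k : ι ⊕ ι × ι) : 0 ≤ φ (ddGen v φ k) := by
  classical
  rcases k with i | p <;> simp only [ddGen, Sum.elim_inl, Sum.elim_inr] <;> split_ifs with h
  · exact h
  · simp
  · simp only [map_sub, map_smul, smul_eq_mul]; ring_nf; simp
  · simp

lemma ddGen_mem {ι : Type} [Fintype ι] (v : ι → Fin n → ℝ)
    (φ : (Fin n → ℝ) →ₗ[ℝ] ℝ) (k : ι ⊕ ι × ι) : ddGen v φ k ∈ coneOf v := by
  classical
  rcases k with i | p <;> simp only [ddGen, Sum.elim_inl, Sum.elim_inr] <;> split_ifs with h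
  · exact gen_mem_coneOf v i
  · exact zero_mem_coneOf v
  · have : φ (v p.1) • v p.2 - φ (v p.2) • v p.1
        = φ (v p.1) • v p.2 + (-φ (v p.2)) • v p.1 := by
      rw [neg_smul]; abel
    rw [this]
    exact add_mem_coneOf (smul_mem_coneOf h.1.le (gen_mem_coneOf v _))
      (smul_mem_coneOf (by linarith [h.2]) (gen_mem_coneOf v _))
  · exact zero_mem_coneOf v

lemma phi_sum {ι : Type} [Fintype ι] (v : ι → Fin n → ℝ)
    (φ : (Fin n → ℝ) →ₗ[ℝ] ℝ) (c : ι → ℝ) :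
    φ (∑ i, c i • v i) = ∑ i, c i * φ (v i) := by
  simp [map_sum]

lemma dd_main {ι : Type} [Fintype ι] [DecidableEq ι] (v : ι → Fin n → ℝ)
    (φ : (Fin n → ℝ) →ₗ[ℝ] ℝ) :
    ∀ (N : ℕ) (c : ι → ℝ), (Finset.univ.filter (fun i => c i ≠ 0)).card ≤ N →
      (∀ i, 0 ≤ c i) → 0 ≤ φ (∑ i, c i • v i) →
      ∑ i, c i • v i ∈ coneOf (ddGen v φ) := by
  classical
  intro N
  induction N with
  | zero =>
      intro c hcard hc hφ
      have : ∀ i, c i = 0 := by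
        intro i
        by_contra h
        have : i ∈ Finset.univ.filter (fun i => c i ≠ 0) := by simp [h]
        have := Finset.card_pos.mpr ⟨i, this⟩
        omega
      simp only [this, zero_smul, Finset.sum_const_zero]
      exact zero_mem_coneOf _
  | succ N IH =>
      intro c hcard hc hφ
      by_cases hA : ∀ j, c j ≠ 0 → 0 ≤ φ (v j)
      · -- all active generators on the good side
        refine ⟨Sum.elim (fun i => if 0 ≤ φ (v i) then c i else 0) (fun _ => 0),
          fun k => ?_, ?_⟩
        · rcases k with i | p
          · simp only [Sum.elim_inl]; split_ifs; exacts [hc i, le_rfl]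
          · simp
        · rw [Fintype.sum_sum_type]
          simp only [Sum.elim_inl, Sum.elim_inr, zero_smul, Finset.sum_const_zero, add_zero]
          refine Finset.sum_congr rfl (fun i _ => ?_)
          simp only [ddGen, Sum.elim_inl]
          split_ifs with h
          · rfl
          · have : c i = 0 := by
              by_contra hne
              exact h (hA i hne)
            simp [this]
      · push_neg at hA
        obtain ⟨j, hcj, hvj⟩ := hA
        have hcj' : 0 < c j := lt_of_le_of_ne (hc j) (Ne.symm hcj)
        have hex : ∃ i, c i ≠ 0 ∧ 0 < φ (v i) := by
          by_contra h
          push_neg at h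
          have hlt : φ (∑ i, c i • v i) < 0 := by
            rw [phi_sum]
            have : ∑ i, c i * φ (v i) < ∑ i : ι, (0:ℝ) := by
              refine Finset.sum_lt_sum (fun i _ => ?_) ⟨j, Finset.mem_univ j, ?_⟩
              · by_cases hci : c i = 0
                · simp [hci]
                · exact mul_nonpos_of_nonneg_of_nonpos (hc i) (h i hci)
              · exact mul_neg_of_pos_of_neg hcj' hvj
            simpa using this
          linarith
        obtain ⟨i, hci, hvi⟩ := hex
        have hci' : 0 < c i := lt_of_le_of_ne (hc i) (Ne.symm hci)
        have hij : i ≠ j := fun h => by rw [h] at hvi; linarith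
        set a : ℝ := φ (v i) with ha
        set b : ℝ := -φ (v j) with hb
        have hb' : 0 < b := by simp [hb]; linarith
        set ε : ℝ := min (c i / b) (c j / a) with hε
        have hε' : 0 < ε := lt_min (div_pos hci' hb') (div_pos hcj' hvi)
        set c'' : ι → ℝ := fun k =>
          c k - (if k = i then ε * b else 0) - (if k = j then ε * a else 0) with hc''def
        have hc''i : c'' i = c i - ε * b := by simp [hc''def, hij]
        have hc''j : c'' j = c j - ε * a := by simp [hc''def, hij.symm]
        have hc''nn : ∀ k, 0 ≤ c'' k := by
          intro k
          by_cases h1 : k = i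
          · rw [h1, hc''i]
            have : ε ≤ c i / b := min_le_left _ _
            rw [le_div_iff₀ hb'] at this
            linarith
          · by_cases h2 : k = j
            · rw [h2, hc''j]
              have : ε ≤ c j / a := min_le_right _ _
              rw [le_div_iff₀ hvi] at this
              linarith
            · simp [hc''def, h1, h2, hc k]
        have hsub : Finset.univ.filter (fun k => c'' k ≠ 0) ⊂
            Finset.univ.filter (fun k => c k ≠ 0) := by
          constructor
          · intro k hk
            simp only [Finset.mem_filter, Finset.mem_univ, true_and] at hk ⊢
            by_cases h1 : k = i
            · rw [h1]; exact hci
            · by_cases h2 : k = j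
              · rw [h2]; exact hcj
              · simpa [hc''def, h1, h2] using hk
          · rcases min_cases (c i / b) (c j / a) with ⟨hmin, _⟩ | ⟨hmin, _⟩
            · intro hsup
              have hi0 : c'' i = 0 := by
                rw [hc''i, hε, hmin, div_mul_cancel₀]
                · ring
                · positivity
              have hi1 : i ∈ Finset.univ.filter (fun k => c k ≠ 0) := by simp [hci]
              have := hsup hi1
              simp only [Finset.mem_filter, Finset.mem_univ, true_and] at this
              exact this hi0
            · intro hsup
              have hj0 : c'' j = 0 := by
                rw [hc''j, hε, hmin, div_mul_cancel₀]
                · ring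
                · positivity
              have hj1 : j ∈ Finset.univ.filter (fun k => c k ≠ 0) := by simp [hcj]
              have := hsup hj1
              simp only [Finset.mem_filter, Finset.mem_univ, true_and] at this
              exact this hj0
        have hcard' : (Finset.univ.filter (fun k => c'' k ≠ 0)).card ≤ N := by
          have := Finset.card_lt_card hsub
          omega
        have hpair : ddGen v φ (Sum.inr (i, j)) = a • v j + b • v i := by
          simp only [ddGen, Sum.elim_inr]
          rw [if_pos ⟨hvi, hvj⟩, hb, ← ha, neg_smul, sub_eq_add_neg]
        have hsum'' : ∑ k, c'' k • v k
            = (∑ k, c k • v k) - (ε * b) • v i - (ε * a) • v j := by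
          simp only [hc''def, sub_smul, ite_smul, zero_smul, Finset.sum_sub_distrib,
            Finset.sum_ite_eq', Finset.mem_univ, if_true]
        have hdecomp : ∑ k, c k • v k
            = ε • (ddGen v φ (Sum.inr (i, j))) + ∑ k, c'' k • v k := by
          rw [hsum'', hpair, smul_add, smul_smul, smul_smul]
          abel
        have hφpair : φ (ddGen v φ (Sum.inr (i, j))) = 0 := by
          rw [hpair]
          simp only [map_add, map_smul, smul_eq_mul, ← ha, hb]
          ring
        have hφ'' : 0 ≤ φ (∑ k, c'' k • v k) := by
          have h1 := congrArg φ hdecomp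
          rw [map_add, map_smul, hφpair, smul_eq_mul, mul_zero, zero_add] at h1
          rw [← h1]; exact hφ
        rw [hdecomp]
        exact add_mem_coneOf (smul_mem_coneOf hε'.le (gen_mem_coneOf _ _))
          (IH c'' hcard' hc''nn hφ'')


lemma dd_core {ι : Type} [Fintype ι] (v : ι → Fin n → ℝ) (φ : (Fin n → ℝ) →ₗ[ℝ] ℝ) :
    coneOf v ∩ {w | 0 ≤ φ w} = coneOf (ddGen v φ) := by
  classical
  ext w
  constructor
  · rintro ⟨⟨c, hc, rfl⟩, hw⟩
    exact dd_main v φ _ c le_rfl hc hw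
  · rintro ⟨c, hc, rfl⟩
    refine ⟨sum_mem_coneOf (ddGen_mem v φ) hc, ?_⟩
    rw [Set.mem_setOf_eq, phi_sum]
    exact Finset.sum_nonneg (fun k _ => mul_nonneg (hc k) (ddGen_nonneg v φ k))

open Classical in
noncomputable def ddGenInt {ι : Type} [Fintype ι] (v : ι → Fin n → ℤ) (u : Fin n → ℤ) :
    ι ⊕ ι × ι → Fin n → ℤ :=
  Sum.elim (fun i => if 0 ≤ intDot u (v i) then v i else 0)
    (fun p => if 0 < intDot u (v p.1) ∧ intDot u (v p.2) < 0
      then intDot u (v p.1) • v p.2 - intDot u (v p.2) • v p.1 else 0)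

lemma castVec_ddGenInt {ι : Type} [Fintype ι] (v : ι → Fin n → ℤ) (u : Fin n → ℤ) :
    (fun k => castVec (ddGenInt v u k)) = ddGen (fun i => castVec (v i)) (dotL u) := by
  classical
  funext k
  rcases k with i | p
  · simp only [ddGenInt, ddGen, Sum.elim_inl, dotL_castVec]
    split_ifs with h1 h2 h2
    · rfl
    · exact absurd (by exact_mod_cast h1) h2
    · exact absurd (by exact_mod_cast h2) h1
    · funext j; simp [castVec]
  · simp only [ddGenInt, ddGen, Sum.elim_inr, dotL_castVec]
    split_ifs with h1 h2 h2
    · funext j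
      simp only [castVec, Pi.sub_apply, Pi.smul_apply, smul_eq_mul]
      push_cast
      ring
    · exact absurd ⟨by exact_mod_cast h1.1, by exact_mod_cast h1.2⟩ h2
    · exact absurd ⟨by exact_mod_cast h2.1, by exact_mod_cast h2.2⟩ h1
    · funext j; simp [castVec]

lemma max_sub_max (x : ℝ) : max x 0 - max (-x) 0 = x := by
  rcases le_total x 0 with h | h
  · rw [max_eq_right h, max_eq_left (by linarith)]; ring
  · rw [max_eq_left h, max_eq_right (by linarith)]; ring

/-- A cone cut out by integer linear inequalities is generated by finitely many
integer vectors. -/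
lemma halfspaces_eq_coneOf (m : ℕ) (u : Fin m → Fin n → ℤ) :
    ∃ (κ : Type) (_ : Fintype κ) (v : κ → Fin n → ℤ),
      {w : Fin n → ℝ | ∀ i, 0 ≤ latticePair (u i) w} = coneOf (fun k => castVec (v k)) := by
  classical
  induction m with
  | zero =>
      refine ⟨Fin n ⊕ Fin n, inferInstance, Sum.elim
        (fun j => fun k => if k = j then 1 else 0)
        (fun j => fun k => if k = j then -1 else 0), ?_⟩
      ext w
      simp only [Set.mem_setOf_eq, IsEmpty.forall_iff, forall_const, true_iff]
      refine ⟨Sum.elim (fun j => max (w j) 0) (fun j => max (-(w j)) 0),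
        fun k => by rcases k with j | j <;> simp [le_max_right], ?_⟩
      funext k
      rw [Fintype.sum_sum_type]
      simp only [Sum.elim_inl, Sum.elim_inr, Pi.add_apply, Finset.sum_apply,
        Pi.smul_apply, smul_eq_mul, castVec]
      push_cast
      simp only [mul_ite, mul_one, mul_zero, mul_neg, Finset.sum_ite_eq, Finset.mem_univ,
        if_true]
      have h := max_sub_max (w k)
      linarith
  | succ m IH =>
      obtain ⟨κ, _, v, hv⟩ := IH (fun i => u i.succ)
      refine ⟨κ ⊕ κ × κ, inferInstance, ddGenInt v (u 0), ?_⟩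
      have h1 : {w : Fin n → ℝ | ∀ i, 0 ≤ latticePair (u i) w}
          = coneOf (fun k => castVec (v k)) ∩ {w | 0 ≤ dotL (u 0) w} := by
        rw [← hv]
        ext w
        simp only [Set.mem_setOf_eq, Set.mem_inter_iff, dotL_apply]
        constructor
        · intro h; exact ⟨fun i => h i.succ, h 0⟩
        · rintro ⟨h1, h2⟩ i
          rcases Fin.eq_zero_or_eq_succ i with rfl | ⟨i', rfl⟩
          · exact h2
          · exact h1 i'
      rw [h1, dd_core, castVec_ddGenInt]

/-- Transfer to the `Fin m`-indexed statement. -/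
lemma isRationalCone_of_halfspaces (m : ℕ) (u : Fin m → Fin n → ℤ) :
    ∃ (m' : ℕ) (v : Fin m' → Fin n → ℤ),
      {w : Fin n → ℝ | ∀ i, 0 ≤ latticePair (u i) w}
        = {w | ∃ c : Fin m' → ℝ, (∀ i, 0 ≤ c i) ∧ w = ∑ i, c i • (fun j => (v i j : ℝ))} := by
  classical
  obtain ⟨κ, hκ, v, hv⟩ := halfspaces_eq_coneOf m u
  let e := (Fintype.equivFin κ).symm
  refine ⟨Fintype.card κ, fun i => v (e i), ?_⟩
  rw [hv]
  ext w
  simp only [coneOf, Set.mem_setOf_eq]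
  constructor
  · rintro ⟨c, hc, rfl⟩
    refine ⟨fun i => c (e i), fun i => hc _, ?_⟩
    exact (Equiv.sum_comp e (fun k => c k • castVec (v k))).symm
  · rintro ⟨c, hc, rfl⟩
    refine ⟨fun k => c (e.symm k), fun k => hc _, ?_⟩
    rw [← Equiv.sum_comp e (fun k => c (e.symm k) • castVec (v k))]
    simp only [Equiv.symm_apply_apply]
    rfl


lemma lp_add (u : Fin n → ℤ) (x y : Fin n → ℝ) :
    latticePair u (x + y) = latticePair u x + latticePair u y := by
  rw [← dotL_apply, ← dotL_apply, ← dotL_apply, map_add]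

lemma lp_smul (u : Fin n → ℤ) (a : ℝ) (x : Fin n → ℝ) :
    latticePair u (a • x) = a * latticePair u x := by
  rw [← dotL_apply, ← dotL_apply, map_smul, smul_eq_mul]

lemma nat_unbounded {a b : ℝ} (h : ∀ k : ℕ, 0 ≤ a + k * b) : 0 ≤ b := by
  by_contra hb
  push_neg at hb
  obtain ⟨k, hk⟩ := exists_nat_gt (a / (-b))
  have h1 := h k
  rw [div_lt_iff₀ (by linarith)] at hk
  nlinarith

end GAux

def HasNoLine {E : Type*} [AddCommGroup E] [Module ℝ E] (s : Set E) : Prop :=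
  ¬ ∃ (x v : E), v ≠ 0 ∧ ∀ t : ℝ, x + t • v ∈ s

def IsGammaAdmissibleCone {n : ℕ} (Γ : AddSubgroup ℝ) (σ : Set ((Fin n → ℝ) × ℝ)) : Prop :=
  HasNoLine σ ∧ ∃ (m : ℕ) (u : Fin m → Fin n → ℤ) (γ : Fin m → ℝ),
    (∀ i, γ i ∈ Γ) ∧
    σ = {p : (Fin n → ℝ) × ℝ | 0 ≤ p.2 ∧ ∀ i, 0 ≤ latticePair (u i) p.1 + γ i * p.2}

/-- A polyhedron `P ⊆ N_ℝ` is `Γ`-rational if it is cut out by finitely many inequalities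
`⟨u_i, w⟩ ≥ γ_i` with `u_i ∈ M` and `γ_i ∈ Γ`. -/
def IsGammaRationalPolyhedron {n : ℕ} (Γ : AddSubgroup ℝ) (P : Set (Fin n → ℝ)) : Prop :=
  ∃ (m : ℕ) (u : Fin m → Fin n → ℤ) (γ : Fin m → ℝ),
    (∀ i, γ i ∈ Γ) ∧ P = {w | ∀ i, γ i ≤ latticePair (u i) w}

/-- A rational cone in `N_ℝ`: one generated by finitely many elements of the lattice `N`. -/
def IsRationalCone {n : ℕ} (C : Set (Fin n → ℝ)) : Prop :=
  ∃ (m : ℕ) (v : Fin m → Fin n → ℤ),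
    C = {w | ∃ c : Fin m → ℝ, (∀ i, 0 ≤ c i) ∧ w = ∑ i, c i • (fun j => (v i j : ℝ))}

/-- `τ` is a face of the cone `σ` if `τ` is the intersection of `σ` with the kernel of a
linear functional nonnegative on `σ`. -/
def IsFaceOfCone {E : Type*} [AddCommGroup E] [Module ℝ E] (τ σ : Set E) : Prop :=
  ∃ ℓ : E →ₗ[ℝ] ℝ, (∀ x ∈ σ, 0 ≤ ℓ x) ∧ τ = {x ∈ σ | ℓ x = 0}

/-- A fan: a collection of cones closed under taking faces such that the intersection of any two
members is a face of each. -/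
def IsFanOfSets {E : Type*} [AddCommGroup E] [Module ℝ E] (Δ : Set (Set E)) : Prop :=
  (∀ σ ∈ Δ, ∀ τ, IsFaceOfCone τ σ → τ ∈ Δ) ∧
  ∀ σ ∈ Δ, ∀ τ ∈ Δ, IsFaceOfCone (σ ∩ τ) σ ∧ IsFaceOfCone (σ ∩ τ) τ

/-- `Q` is a face of the polyhedron `P` if it is the locus in `P` where some linear functional,
bounded below on `P`, attains its minimum value. -/
def IsPolyFaceOf {n : ℕ} (Q P : Set (Fin n → ℝ)) : Prop :=
  ∃ (ℓ : (Fin n → ℝ) →ₗ[ℝ] ℝ) (c : ℝ), (∀ w ∈ P, c ≤ ℓ w) ∧ Q = {w ∈ P | ℓ w = c}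

/-- The recession cone of `P`. -/
def recCone {n : ℕ} (P : Set (Fin n → ℝ)) : Set (Fin n → ℝ) :=
  {v | ∀ w ∈ P, w + v ∈ P}

/-- Let `Δ` be a `Γ`-admissible fan in `N_ℝ × ℝ_{≥0}` and let `Δ₁`, `Δ₀` be its slices at
heights `1` and `0`.  Then `Δ₁` is a `Γ`-rational polyhedral complex, `Δ₀` is a rational fan in
`N_ℝ`, and the recession cone of every (nonempty) member of `Δ₁` belongs to `Δ₀`. -/
theorem gammaAdmissible_fan_slices {n : ℕ} (Γ : AddSubgroup ℝ) (hΓ : Γ ≠ ⊥)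
    (Δ : Set (Set ((Fin n → ℝ) × ℝ))) (hfan : IsFanOfSets Δ)
    (hadm : ∀ σ ∈ Δ, IsGammaAdmissibleCone Γ σ)
    (Δ₁ : Set (Set (Fin n → ℝ))) (hΔ₁ : Δ₁ = {P | ∃ σ ∈ Δ, P = {w | (w, (1 : ℝ)) ∈ σ}})
    (Δ₀ : Set (Set (Fin n → ℝ))) (hΔ₀ : Δ₀ = {C | ∃ σ ∈ Δ, C = {w | (w, (0 : ℝ)) ∈ σ}}) :
    -- `Δ₁` is a `Γ`-rational polyhedral complex:
    (∀ P ∈ Δ₁, IsGammaRationalPolyhedron Γ P ∧ HasNoLine P) ∧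
    (∀ P ∈ Δ₁, ∀ Q, IsPolyFaceOf Q P → Q ∈ Δ₁) ∧
    (∀ P ∈ Δ₁, ∀ Q ∈ Δ₁, IsPolyFaceOf (P ∩ Q) P ∧ IsPolyFaceOf (P ∩ Q) Q) ∧
    -- `Δ₀` is a rational fan:
    (∀ C ∈ Δ₀, (IsRationalCone C ∧ HasNoLine C)) ∧
    (∀ C ∈ Δ₀, ∀ D, IsFaceOfCone D C → D ∈ Δ₀) ∧
    (∀ C ∈ Δ₀, ∀ D ∈ Δ₀, IsFaceOfCone (C ∩ D) C ∧ IsFaceOfCone (C ∩ D) D) ∧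
    -- recession cones of members of `Δ₁` lie in `Δ₀`:
    (∀ P ∈ Δ₁, P.Nonempty → recCone P ∈ Δ₀) := by
  open GAux in
  subst hΔ₁ hΔ₀
  -- description of slices
  have slice1 : ∀ σ ∈ Δ, ∀ (m : ℕ) (u : Fin m → Fin n → ℤ) (γ : Fin m → ℝ),
      σ = {p : (Fin n → ℝ) × ℝ | 0 ≤ p.2 ∧ ∀ i, 0 ≤ latticePair (u i) p.1 + γ i * p.2} →
      {w | (w, (1:ℝ)) ∈ σ} = {w | ∀ i, 0 ≤ latticePair (u i) w + γ i} := by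
    intro σ hσ m u γ hdesc
    ext w
    rw [hdesc]
    simp only [Set.mem_setOf_eq, mul_one]
    exact ⟨fun h => h.2, fun h => ⟨zero_le_one, h⟩⟩
  have slice0 : ∀ σ ∈ Δ, ∀ (m : ℕ) (u : Fin m → Fin n → ℤ) (γ : Fin m → ℝ),
      σ = {p : (Fin n → ℝ) × ℝ | 0 ≤ p.2 ∧ ∀ i, 0 ≤ latticePair (u i) p.1 + γ i * p.2} →
      {w | (w, (0:ℝ)) ∈ σ} = {w | ∀ i, 0 ≤ latticePair (u i) w} := by
    intro σ hσ m u γ hdesc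
    ext w
    rw [hdesc]
    simp only [Set.mem_setOf_eq, mul_zero, add_zero, le_refl, true_and]
  -- key fact for the Δ₁ intersection claim
  have key1 : ∀ σ ∈ Δ, ∀ τ ∈ Δ,
      IsPolyFaceOf ({w | (w, (1:ℝ)) ∈ σ} ∩ {w | (w, (1:ℝ)) ∈ τ}) {w | (w, (1:ℝ)) ∈ σ} := by
    intro σ hσ τ hτ
    obtain ⟨L, hL, hface⟩ := (hfan.2 σ hσ τ hτ).1
    refine ⟨L.comp (LinearMap.inl ℝ (Fin n → ℝ) ℝ), -L (0, 1), fun w hw => ?_, ?_⟩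
    · have h0 := hL _ hw
      have : L (w, (1:ℝ)) = L (w, 0) + L (0, 1) := by
        rw [← map_add]
        norm_num
      simp only [LinearMap.comp_apply, LinearMap.inl_apply]
      linarith
    · ext w
      constructor
      · rintro ⟨h1, h2⟩
        have hmem : (w, (1:ℝ)) ∈ σ ∩ τ := ⟨h1, h2⟩
        rw [hface] at hmem
        obtain ⟨hm1, hm2⟩ := hmem
        refine ⟨h1, ?_⟩
        have : L (w, (1:ℝ)) = L (w, 0) + L (0, 1) := by
          rw [← map_add]; norm_num
        simp only [LinearMap.comp_apply, LinearMap.inl_apply]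
        linarith [hm2, this]
      · rintro ⟨h1, h2⟩
        simp only [LinearMap.comp_apply, LinearMap.inl_apply] at h2
        have : L (w, (1:ℝ)) = L (w, 0) + L (0, 1) := by
          rw [← map_add]; norm_num
        have hmem : (w, (1:ℝ)) ∈ σ ∩ τ := by
          rw [hface]
          exact ⟨h1, by linarith⟩
        exact ⟨hmem.1, hmem.2⟩
  -- key fact for the Δ₀ intersection claim
  have key0 : ∀ σ ∈ Δ, ∀ τ ∈ Δ,
      IsFaceOfCone ({w | (w, (0:ℝ)) ∈ σ} ∩ {w | (w, (0:ℝ)) ∈ τ}) {w | (w, (0:ℝ)) ∈ σ} := by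
    intro σ hσ τ hτ
    obtain ⟨L, hL, hface⟩ := (hfan.2 σ hσ τ hτ).1
    refine ⟨L.comp (LinearMap.inl ℝ (Fin n → ℝ) ℝ), fun w hw => hL _ hw, ?_⟩
    ext w
    constructor
    · rintro ⟨h1, h2⟩
      have hmem : (w, (0:ℝ)) ∈ σ ∩ τ := ⟨h1, h2⟩
      rw [hface] at hmem
      exact ⟨hmem.1, hmem.2⟩
    · rintro ⟨h1, h2⟩
      have hmem : (w, (0:ℝ)) ∈ σ ∩ τ := by
        rw [hface]; exact ⟨h1, h2⟩
      exact ⟨hmem.1, hmem.2⟩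
  refine ⟨?_, ?_, ?_, ?_, ?_, ?_, ?_⟩
  · -- Δ₁ members are Γ-rational and have no line
    rintro P ⟨σ, hσ, rfl⟩
    obtain ⟨hline, m, u, γ, hγ, hdesc⟩ := hadm σ hσ
    constructor
    · refine ⟨m, u, fun i => -γ i, fun i => neg_mem (hγ i), ?_⟩
      rw [slice1 σ hσ m u γ hdesc]
      ext w
      simp only [Set.mem_setOf_eq]
      constructor
      · intro h i; linarith [h i]
      · intro h i; linarith [h i]
    · rintro ⟨x, v, hv, hl⟩
      refine hline ⟨(x, 1), (v, 0), ?_, fun t => ?_⟩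
      · simp [Prod.ext_iff, hv]
      · have := hl t
        simpa [Prod.ext_iff] using this
  · -- Δ₁ closed under faces
    rintro P ⟨σ, hσ, rfl⟩ Q ⟨ℓ, cst, hbound, hQeq⟩
    obtain ⟨hline, m, u, γ, hγ, hdesc⟩ := hadm σ hσ
    by_cases hPE : {w | (w, (1:ℝ)) ∈ σ}.Nonempty
    · obtain ⟨x₀, hx₀⟩ := hPE
      set L : ((Fin n → ℝ) × ℝ) →ₗ[ℝ] ℝ :=
        ℓ.comp (LinearMap.fst ℝ (Fin n → ℝ) ℝ) - cst • (LinearMap.snd ℝ (Fin n → ℝ) ℝ)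
        with hLdef
      have hLapp : ∀ (w : Fin n → ℝ) (t : ℝ), L (w, t) = ℓ w - cst * t := by
        intro w t
        simp [hLdef]
      have hx₀' : (∀ i, 0 ≤ latticePair (u i) x₀ + γ i) := by
        have := hx₀
        rw [hdesc] at this
        simpa using this.2
      have hL : ∀ p ∈ σ, 0 ≤ L p := by
        rintro ⟨w, t⟩ hp
        rw [hdesc] at hp
        obtain ⟨ht, hp⟩ := hp
        simp only at ht hp
        rcases eq_or_lt_of_le ht with ht0 | ht0
        · -- t = 0
          rw [hLapp, ← ht0, mul_zero, sub_zero]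
          have hmem : ∀ k : ℕ, (x₀ + (k:ℝ) • w, (1:ℝ)) ∈ σ := by
            intro k
            rw [hdesc]
            refine ⟨zero_le_one, fun i => ?_⟩
            have h1 := hp i
            rw [← ht0, mul_zero, add_zero] at h1
            have h2 := hx₀' i
            rw [lp_add, lp_smul]
            have : 0 ≤ (k:ℝ) * latticePair (u i) w :=
              mul_nonneg (Nat.cast_nonneg k) h1
            simp only [mul_one]
            linarith
          have hnat : ∀ k : ℕ, 0 ≤ (ℓ x₀ - cst) + (k:ℝ) * ℓ w := by
            intro k
            have := hbound _ (hmem k)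
            rw [map_add, map_smul, smul_eq_mul] at this
            linarith
          linarith [nat_unbounded hnat]
        · -- 0 < t
          have hmem : (t⁻¹ • w, (1:ℝ)) ∈ σ := by
            rw [hdesc]
            refine ⟨zero_le_one, fun i => ?_⟩
            have h1 := hp i
            rw [lp_smul]
            simp only [mul_one]
            have h2 : 0 ≤ t⁻¹ * (latticePair (u i) w + γ i * t) :=
              mul_nonneg (inv_nonneg.mpr ht) h1
            have h3 : t⁻¹ * (γ i * t) = γ i := by field_simp
            calc (0:ℝ) ≤ t⁻¹ * (latticePair (u i) w + γ i * t) := h2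
              _ = t⁻¹ * latticePair (u i) w + γ i := by rw [mul_add, h3]
          have h1 := hbound _ hmem
          rw [map_smul, smul_eq_mul] at h1
          have h4 := mul_le_mul_of_nonneg_left h1 ht0.le
          have h5 : t * (t⁻¹ * ℓ w) = ℓ w := by field_simp
          rw [h5] at h4
          rw [hLapp]
          linarith
      refine ⟨{p ∈ σ | L p = 0}, hfan.1 σ hσ _ ⟨L, hL, rfl⟩, ?_⟩
      rw [hQeq]
      ext w
      simp only [Set.mem_setOf_eq, hLapp, mul_one]
      constructor
      · rintro ⟨h1, h2⟩; exact ⟨h1, by linarith⟩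
      · rintro ⟨h1, h2⟩; exact ⟨h1, by linarith⟩
    · -- the slice is empty
      have hPempty : {w | (w, (1:ℝ)) ∈ σ} = ∅ := Set.not_nonempty_iff_eq_empty.mp hPE
      refine ⟨{p ∈ σ | (LinearMap.snd ℝ (Fin n → ℝ) ℝ) p = 0},
        hfan.1 σ hσ _ ⟨LinearMap.snd ℝ (Fin n → ℝ) ℝ, ?_, rfl⟩, ?_⟩
      · intro p hp
        rw [hdesc] at hp
        exact hp.1
      · rw [hQeq, hPempty]
        ext w
        simp
  · -- Δ₁ intersections are faces
    rintro P ⟨σ, hσ, rfl⟩ Q ⟨τ, hτ, rfl⟩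
    refine ⟨key1 σ hσ τ hτ, ?_⟩
    rw [Set.inter_comm]
    exact key1 τ hτ σ hσ
  · -- Δ₀ members are rational cones and have no line
    rintro C ⟨σ, hσ, rfl⟩
    obtain ⟨hline, m, u, γ, hγ, hdesc⟩ := hadm σ hσ
    constructor
    · obtain ⟨m', v, hv⟩ := isRationalCone_of_halfspaces m u
      exact ⟨m', v, by rw [slice0 σ hσ m u γ hdesc, hv]⟩
    · rintro ⟨x, v, hv, hl⟩
      refine hline ⟨(x, 0), (v, 0), ?_, fun t => ?_⟩
      · simp [Prod.ext_iff, hv]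
      · have := hl t
        simpa [Prod.ext_iff] using this
  · -- Δ₀ closed under faces
    rintro C ⟨σ, hσ, rfl⟩ D ⟨ℓ, hℓ, hDeq⟩
    obtain ⟨hline, m, u, γ, hγ, hdesc⟩ := hadm σ hσ
    have hσ₀ : {p ∈ σ | (LinearMap.snd ℝ (Fin n → ℝ) ℝ) p = 0} ∈ Δ := by
      refine hfan.1 σ hσ _ ⟨LinearMap.snd ℝ (Fin n → ℝ) ℝ, ?_, rfl⟩
      intro p hp
      rw [hdesc] at hp
      exact hp.1
    set L : ((Fin n → ℝ) × ℝ) →ₗ[ℝ] ℝ := ℓ.comp (LinearMap.fst ℝ (Fin n → ℝ) ℝ) with hLdef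
    have hL : ∀ p ∈ {p ∈ σ | (LinearMap.snd ℝ (Fin n → ℝ) ℝ) p = 0}, 0 ≤ L p := by
      rintro ⟨w, t⟩ ⟨hp, hp2⟩
      simp only [LinearMap.snd_apply] at hp2
      subst hp2
      exact hℓ w hp
    refine ⟨{p ∈ {p ∈ σ | (LinearMap.snd ℝ (Fin n → ℝ) ℝ) p = 0} | L p = 0},
      hfan.1 _ hσ₀ _ ⟨L, hL, rfl⟩, ?_⟩
    rw [hDeq]
    ext w
    simp only [Set.mem_setOf_eq, LinearMap.snd_apply, hLdef, LinearMap.comp_apply,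
      LinearMap.fst_apply]
    tauto
  · -- Δ₀ intersections are faces
    rintro C ⟨σ, hσ, rfl⟩ D ⟨τ, hτ, rfl⟩
    refine ⟨key0 σ hσ τ hτ, ?_⟩
    rw [Set.inter_comm]
    exact key0 τ hτ σ hσ
  · -- recession cones
    rintro P ⟨σ, hσ, rfl⟩ hne
    obtain ⟨hline, m, u, γ, hγ, hdesc⟩ := hadm σ hσ
    refine ⟨σ, hσ, ?_⟩
    ext v
    constructor
    · intro hv
      obtain ⟨x₀, hx₀⟩ := hne
      have hx₀' : (∀ i, 0 ≤ latticePair (u i) x₀ + γ i) := by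
        have := hx₀
        rw [hdesc] at this
        simpa using this.2
      have hk : ∀ k : ℕ, x₀ + (k:ℝ) • v ∈ {w | (w, (1:ℝ)) ∈ σ} := by
        intro k
        induction k with
        | zero => simpa using hx₀
        | succ k ih =>
            have := hv _ ih
            have heq : x₀ + (k:ℝ) • v + v = x₀ + ((k:ℝ) + 1) • v := by
              rw [add_smul, one_smul]; abel
            rw [heq] at this
            push_cast
            exact this
      rw [hdesc]
      refine ⟨le_rfl, fun i => ?_⟩
      simp only [mul_zero, add_zero]
      have hnat : ∀ k : ℕ, 0 ≤ (latticePair (u i) x₀ + γ i) + (k:ℝ) * latticePair (u i) v := by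
        intro k
        have := hk k
        rw [Set.mem_setOf_eq, hdesc] at this
        have h1 := this.2 i
        rw [lp_add, lp_smul] at h1
        simp only [mul_one] at h1
        linarith
      exact nat_unbounded hnat
    · intro hv w hw
      rw [Set.mem_setOf_eq, hdesc] at hw ⊢
      rw [hdesc] at hv
      obtain ⟨-, hv2⟩ := hv
      refine ⟨zero_le_one, fun i => ?_⟩
      have h1 := hw.2 i
      have h2 := hv2 i
      simp only [mul_zero, add_zero] at h2
      rw [lp_add]
      simp only [mul_one] at h1 ⊢
      linarith
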